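/- arXiv:1205.2331 — 2 statements merged into one kernel-verified Lean document; each statement's English description precedes it below -/
import Mathlib

section
/- If β ≤_C α in the composition poset and α//β is a horizontal composition strip, then λ(β) ⊆ λ(α) and the skew shape λ(α)/λ(β) is a horizontal strip of size |α| − |β|. -/
/-! ## Partitions -/

/-- A partition: a weakly decreasing finite list of positive integers. -/
abbrev Ptn : Type := {l : List ℕ+ // l.Pairwise (· ≥ ·)}

/-- The `i`-th part (0-indexed) of a list of positive integers, `0` past the end. -/
def pget (l : List ℕ+) (i : ℕ) : ℕ := (l.map fun p => (p : ℕ)).getD i 0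

/-- The size `|l|` of a list of positive integers: the sum of its parts. -/
def psum (l : List ℕ+) : ℕ := (l.map fun p => (p : ℕ)).sum

/-- The empty partition. -/
def emptyPtn : Ptn := ⟨[], List.Pairwise.nil⟩

/-- Containment of partitions: `μ ⊆ λ` iff `μᵢ ≤ λᵢ` for all `i`. -/
def PtnSub (μ lam : Ptn) : Prop := ∀ i, pget μ.1 i ≤ pget lam.1 i

/-- `λ/μ` is a horizontal strip of size `i`: `μ ⊆ λ`, no two cells of `λ/μ` in the same
column (equivalently `λ_{i+1} ≤ μ_i` for all `i`), and `|λ| = |μ| + i`. -/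
def HStrip (μ lam : Ptn) (i : ℕ) : Prop :=
  PtnSub μ lam ∧ (∀ n, pget lam.1 (n + 1) ≤ pget μ.1 n) ∧ psum lam.1 = psum μ.1 + i

/-- The Kostka number `K_{λ,μ}`: the number of chains
`∅ = ν⁰ ⊆ ν¹ ⊆ ⋯ ⊆ νᵐ = λ` of partitions in which each `νⁱ/νⁱ⁻¹` is a horizontal strip of
size `μᵢ` (semistandard tableaux of shape `λ` and content `μ`). -/
noncomputable def Knum (lam : Ptn) (μ : List ℕ+) : ℕ :=
  Nat.card {ν : Fin (μ.length + 1) → Ptn //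
    ν 0 = emptyPtn ∧ ν (Fin.last μ.length) = lam ∧
      ∀ i : Fin μ.length, HStrip (ν i.castSucc) (ν i.succ) ((μ.get i : ℕ))}

/-! ## SymA -/

/-- `SymA = ℚ[h₁, h₂, …]`, a polynomial algebra on countably many generators. -/
abbrev SymA : Type := MvPolynomial ℕ+ ℚ

/-- The generator `hᵢ` of `SymA`. -/
noncomputable def hGen (i : ℕ+) : SymA := MvPolynomial.X i

/-- `h_λ = h_{λ₁} ⋯ h_{λ_m}`. -/
noncomputable def hL (l : List ℕ+) : SymA := (l.map hGen).prod

/-- A family `s : Ptn → SymA` with `s ∅ = 1` satisfying the Pieri rule: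
`hᵢ • s_λ = Σ_μ s_μ`, the sum over partitions `μ ⊇ λ` with `μ/λ` a horizontal strip
of size `i` (for every `i ≥ 1`). -/
def PieriFamily (s : Ptn → SymA) : Prop :=
  s emptyPtn = 1 ∧
    ∀ (i : ℕ+) (lam : Ptn),
      hGen i * s lam = ∑ᶠ μ ∈ {μ : Ptn | HStrip lam μ (i : ℕ)}, s μ

/-! ## Power series: monomial (quasi-)symmetric functions -/

/-- The ambient algebra of formal power series in countably many commuting variables
`x₀, x₁, x₂, …` (we only use elements of bounded degree). -/
abbrev PS : Type := MvPowerSeries ℕ ℚ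

/-- The complete homogeneous symmetric power series of degree `i`: the sum of all
monomials of degree `i`. -/
def hPS (i : ℕ+) : PS := fun d => if (d.sum fun _ n => n) = (i : ℕ) then 1 else 0

/-- The realization `SymA → PS` sending each generator `hᵢ` to the complete homogeneous
symmetric function of degree `i`. -/
noncomputable def realize : SymA →ₐ[ℚ] PS := MvPolynomial.aeval hPS

/-- The monomial quasi-symmetric function `M_α = Σ_{i₁<⋯<i_m} x_{i₁}^{α₁} ⋯ x_{i_m}^{α_m}`. -/
def Mqs (α : List ℕ+) : PS :=
  fun d => if (d.support.sort (· ≤ ·)).map (fun j => d j) = α.map (fun p => (p : ℕ))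
    then 1 else 0

/-- The monomial symmetric function `m_λ = Σ_{α : λ(α) = λ} M_α`: the sum of all distinct
monomials whose exponent sequence rearranges to `λ`. -/
noncomputable def mPS (lam : Ptn) : PS := ∑ᶠ α ∈ {α : List ℕ+ | α.Perm lam.1}, Mqs α

/-! ## NSym and compositions -/

/-- `NSym`, the free associative algebra on noncommuting generators `H₁, H₂, …`. -/
abbrev NSym : Type := FreeAlgebra ℚ ℕ+

/-- The generator `Hᵢ` of `NSym`. -/
def Hgen (i : ℕ+) : NSym := FreeAlgebra.ι ℚ i

/-- `H_α = H_{α₁} ⋯ H_{α_m}`. -/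
def HL (α : List ℕ+) : NSym := (α.map Hgen).prod

/-- The covering relation of the composition poset: `α` is obtained from `β` either by
prepending a new part equal to `1`, or by replacing the leftmost part of `β` equal to `m`
by `m + 1`. -/
def CCover (β α : List ℕ+) : Prop :=
  α = 1 :: β ∨
    ∃ (m : ℕ+) (l₁ l₂ : List ℕ+), β = l₁ ++ m :: l₂ ∧ α = l₁ ++ (m + 1) :: l₂ ∧ m ∉ l₁

/-- The composition poset order `≤_C`, the reflexive-transitive closure of the covering
relation. -/
def CLe : List ℕ+ → List ℕ+ → Prop := Relation.ReflTransGen CCover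

/-- `(r, c)` is a cell of the skew diagram `α//β` (rows `r` and columns `c` `0`-indexed,
with the diagram of `β` placed in the lower-left corner of the diagram of `α`, i.e. row
`r ≥ ℓ(α) - ℓ(β)` of `α` is aligned with row `r - (ℓ(α) - ℓ(β))` of `β`). -/
def stripCell (β α : List ℕ+) (r c : ℕ) : Prop :=
  r < α.length ∧ c < pget α r ∧
    (r < α.length - β.length ∨ pget β (r - (α.length - β.length)) ≤ c)

/-- `α//β` is a horizontal composition strip of size `i`: `β ≤_C α`, `|α| = |β| + i`, and
no two cells of `α//β` lie in the same column. -/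
def HCStrip (β α : List ℕ+) (i : ℕ) : Prop :=
  CLe β α ∧ psum α = psum β + i ∧
    ∀ r s c, r ≠ s → stripCell β α r c → ¬ stripCell β α s c

/-- A family `S : compositions → NSym` with `S ∅ = 1` satisfying the noncommutative Pieri
rule: `Hᵢ • S_α = Σ_β S_β`, the sum over compositions `β ≥_C α` with `β//α` a horizontal
composition strip of size `i` (for every `i ≥ 1`). -/
def NCPieriFamily (S : List ℕ+ → NSym) : Prop :=
  S [] = 1 ∧
    ∀ (i : ℕ+) (α : List ℕ+),
      Hgen i * S α = ∑ᶠ β ∈ {β : List ℕ+ | HCStrip α β (i : ℕ)}, S β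

/-- `K̃_{α,β}`: the number of chains `∅ = γ⁰ ≤_C γ¹ ≤_C ⋯ ≤_C γᵐ = α` of compositions in
which each `γⁱ//γⁱ⁻¹` is a horizontal composition strip of size `βᵢ` (semistandard
composition tableaux of shape `α` and content `β`). -/
noncomputable def Ktilde (α β : List ℕ+) : ℕ :=
  Nat.card {γ : Fin (β.length + 1) → List ℕ+ //
    γ 0 = [] ∧ γ (Fin.last β.length) = α ∧
      ∀ i : Fin β.length, HCStrip (γ i.castSucc) (γ i.succ) ((β.get i : ℕ))}

/-- The quasi-symmetric Schur function `QS_α = Σ_β K̃_{α,β} M_β`. -/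
noncomputable def QSfun (α : List ℕ+) : PS := ∑ᶠ β : List ℕ+, Ktilde α β • Mqs β

/-- The forgetful map `χ : NSym → SymA`, the algebra homomorphism with `χ(Hᵢ) = hᵢ`. -/
noncomputable def chi : NSym →ₐ[ℚ] SymA := FreeAlgebra.lift ℚ hGen

/-! ## k-bounded objects -/

/-- A partition is `k`-bounded if all of its parts are at most `k`. -/
def kBddP (k : ℕ) (lam : Ptn) : Prop := ∀ p ∈ lam.1, (p : ℕ) ≤ k

/-- A composition is `k`-bounded if all of its parts are at most `k`. -/
def kBddC (k : ℕ) (α : List ℕ+) : Prop := ∀ p ∈ α, (p : ℕ) ≤ k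

/-!
Read a partition through its column lengths: for a weakly decreasing `l`, `c < lⱼ` iff
`j < colLen l c`, and column lengths do not depend on the order of the parts. So it suffices
to show `colLen β c ≤ colLen α c ≤ colLen β c + 1` for every column `c`. The first inequality
holds along each cover of `≤_C`, since a cover only adds a part or enlarges one. For the second,
in the bottom-aligned picture every row of `α` meeting column `c` is either a shifted row of `β`
meeting it or holds a cell of `α//β` in column `c`, and there is at most one such cell.
-/

open Finset

lemma pget_cons_zero (a : ℕ+) (l : List ℕ+) : pget (a :: l) 0 = a := rfl

lemma pget_cons_succ (a : ℕ+) (l : List ℕ+) (n : ℕ) : pget (a :: l) (n + 1) = pget l n := rfl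

lemma pget_of_length_le {l : List ℕ+} {i : ℕ} (h : l.length ≤ i) : pget l i = 0 := by
  induction l generalizing i with
  | nil => rfl
  | cons a l ih =>
    cases i with
    | zero => simp at h
    | succ i => exact ih (by simpa using h)

lemma psum_cons (a : ℕ+) (l : List ℕ+) : psum (a :: l) = a + psum l := rfl

lemma psum_perm {l₁ l₂ : List ℕ+} (h : l₁.Perm l₂) : psum l₁ = psum l₂ := by
  induction h with
  | nil => rfl
  | cons a _ ih => rw [psum_cons, psum_cons, ih]
  | swap a b l => simp only [psum_cons]; omega
  | trans _ _ ih₁ ih₂ => exact ih₁.trans ih₂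

/-- The length of column `c` of the diagram of `l`. -/
def colLen (l : List ℕ+) (c : ℕ) : ℕ := l.countP fun p : ℕ+ => c < (p : ℕ)

lemma colLen_perm {l₁ l₂ : List ℕ+} (h : l₁.Perm l₂) (c : ℕ) : colLen l₁ c = colLen l₂ c :=
  h.countP_eq _

lemma colLen_nil (c : ℕ) : colLen [] c = 0 := rfl

lemma colLen_cons (a : ℕ+) (l : List ℕ+) (c : ℕ) :
    colLen (a :: l) c = colLen l c + if c < (a : ℕ) then 1 else 0 := by
  simp [colLen, List.countP_cons]

lemma colLen_eq_card_filter (l : List ℕ+) (c : ℕ) :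
    colLen l c = #{r ∈ range l.length | c < pget l r} := by
  induction l with
  | nil => rfl
  | cons a l ih =>
    rw [List.length_cons, card_filter, sum_range_succ', colLen_cons, ih, card_filter]
    rfl

lemma lt_pget_iff_lt_colLen {l : List ℕ+} (hl : l.Pairwise (· ≥ ·)) {c j : ℕ} :
    c < pget l j ↔ j < colLen l c := by
  induction l generalizing j with
  | nil => simp [colLen_nil, pget_of_length_le]
  | cons a l ih =>
    rw [List.pairwise_cons] at hl
    by_cases h : c < (a : ℕ)
    · cases j with
      | zero => simp [pget_cons_zero, colLen_cons, h]
      | succ j => simp [pget_cons_succ, colLen_cons, h, ih hl.2]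
    · have hl0 : colLen l c = 0 := List.countP_eq_zero.2 fun p hp => by
        simpa using ((PNat.coe_le_coe _ _).2 (hl.1 p hp)).trans (not_lt.1 h)
      cases j with
      | zero => simp [pget_cons_zero, colLen_cons, hl0, h]
      | succ j => simp [pget_cons_succ, colLen_cons, ih hl.2, hl0, h]

lemma CCover.colLen_le {β α : List ℕ+} (h : CCover β α) (c : ℕ) : colLen β c ≤ colLen α c := by
  rcases h with rfl | ⟨m, l₁, l₂, rfl, rfl, -⟩
  · exact (List.sublist_cons_self 1 β).countP_le
  · have hm : c < (m : ℕ) → c < ((m + 1 : ℕ+) : ℕ) := fun h => by rw [PNat.add_coe]; omega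
    simp only [colLen, List.countP_append, List.countP_cons]
    split_ifs <;> simp_all

lemma CLe.colLen_le {β α : List ℕ+} (h : CLe β α) (c : ℕ) : colLen β c ≤ colLen α c := by
  induction h with
  | refl => rfl
  | tail _ hcov ih => exact ih.trans (hcov.colLen_le c)

/-- The rows of `α` meeting column `c` that are not shifted rows of `β` meeting it hold cells of
`α//β` in column `c`, so there is at most one of them. -/
lemma colLen_le_colLen_add_one {β α : List ℕ+}
    (hcol : ∀ r s c, r ≠ s → stripCell β α r c → ¬ stripCell β α s c) (c : ℕ) :
    colLen α c ≤ colLen β c + 1 := by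
  set s := α.length - β.length
  set rowsα := {r ∈ range α.length | c < pget α r}
  set rowsβ := ({j ∈ range β.length | c < pget β j} : Finset ℕ).map (addRightEmbedding s)
  have hnew : ∀ r ∈ rowsα \ rowsβ, stripCell β α r c := by
    intro r hr
    simp only [rowsα, rowsβ, mem_sdiff, mem_filter, mem_range, mem_map, addRightEmbedding_apply,
      not_exists, not_and] at hr
    obtain ⟨⟨hr, hc⟩, hβ⟩ := hr
    refine ⟨hr, hc, or_iff_not_imp_left.2 fun hs => not_lt.1 fun hlt => ?_⟩
    have : r - s < β.length := by
      by_contra! hle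
      rw [pget_of_length_le hle] at hlt
      exact Nat.not_lt_zero c hlt
    exact hβ (r - s) ⟨this, hlt⟩ (by omega)
  have hle_one : #(rowsα \ rowsβ) ≤ 1 := card_le_one.2 fun r hr r' hr' =>
    by_contra fun hne => hcol r r' c hne (hnew r hr) (hnew r' hr')
  calc colLen α c = #rowsα := colLen_eq_card_filter α c
    _ ≤ #(rowsα \ rowsβ) + #rowsβ := card_le_card_sdiff_add_card
    _ ≤ colLen β c + 1 := by rw [card_map, ← colLen_eq_card_filter]; omega

lemma PtnSub.of_colLen_le {μ lam : Ptn} (h : ∀ c, colLen μ.1 c ≤ colLen lam.1 c) :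
    PtnSub μ lam := by
  intro j
  by_contra! hlt
  have hj := (lt_pget_iff_lt_colLen μ.2).1 hlt
  exact lt_irrefl _ ((lt_pget_iff_lt_colLen lam.2).2 (hj.trans_le (h _)))

lemma pget_succ_le_of_colLen_le {μ lam : Ptn} (h : ∀ c, colLen lam.1 c ≤ colLen μ.1 c + 1)
    (n : ℕ) : pget lam.1 (n + 1) ≤ pget μ.1 n := by
  by_contra! hlt
  have hlam : n + 1 < colLen lam.1 (pget μ.1 n) := (lt_pget_iff_lt_colLen lam.2).1 hlt
  have hμ : n < colLen μ.1 (pget μ.1 n) := by have := h (pget μ.1 n); omega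
  exact lt_irrefl _ ((lt_pget_iff_lt_colLen μ.2).2 hμ)

/-- If `β ≤_C α` in the composition poset and `α//β` is a horizontal
composition strip (of size `i = |α| - |β|`), then `λ(β) ⊆ λ(α)` and the skew shape
`λ(α)/λ(β)` is a horizontal strip of size `|α| - |β|`. -/
theorem hcstrip_implies_hstrip (β α : List ℕ+) (i : ℕ) (h : HCStrip β α i)
    (lb la : Ptn) (hβ : lb.1.Perm β) (hα : la.1.Perm α) :
    HStrip lb la i := by
  obtain ⟨hle, hsize, hcol⟩ := h
  refine ⟨PtnSub.of_colLen_le fun c => ?_, pget_succ_le_of_colLen_le fun c => ?_, ?_⟩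
  · rw [colLen_perm hβ, colLen_perm hα]
    exact hle.colLen_le c
  · rw [colLen_perm hβ, colLen_perm hα]
    exact colLen_le_colLen_add_one hcol c
  · rw [psum_perm hβ, psum_perm hα, hsize]
end

section
/- Fix an integer k ≥ 1. The ℚ-linear span of the monomial quasi-symmetric functions M_α over all compositions α having a part greater than k is an ideal of QSym; consequently, QSym^(k) := QSym / span{M_α : α not k-bounded} is a ℚ-algebra and the images of {M_α : α is a k-bounded composition} form a ℚ-basis of QSym^(k). -/
/-- `QSym`: the ℚ-span of the monomial quasi-symmetric functions `M_α`. -/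
noncomputable def QSymSub : Submodule ℚ PS := Submodule.span ℚ (Set.range Mqs)

/-- The ℚ-span of the monomial quasi-symmetric functions `M_α` over all compositions `α`
having a part greater than `k`. -/
noncomputable def badC (k : ℕ) : Submodule ℚ PS :=
  Submodule.span ℚ (Mqs '' {α : List ℕ+ | ¬ kBddC k α})

/-- The quotient `QSym^(k) = QSym / span{M_α : α not k-bounded}`. -/
abbrev QSymQuot (k : ℕ) : Type :=
  QSymSub ⧸ Submodule.comap QSymSub.subtype (badC k)

/-- The image of `M_α` in the quotient `QSym^(k)`. -/
noncomputable def MQuot (k : ℕ) (α : List ℕ+) : QSymQuot k :=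
  Submodule.Quotient.mk ⟨Mqs α, Submodule.subset_span (Set.mem_range_self α)⟩

/-!
The coefficient of `x^d` in `M_α` only depends on the sequence of nonzero exponents of `x^d`, so
each `M_α` is invariant under order-preserving relabellings of the variables, and so is any
product of such series. A product `M_α M_β` is therefore determined by its coefficients at the
packed monomials `x_0^{γ_1} ⋯ x_{m-1}^{γ_m}`: it is the finite combination of those `M_γ` whose
packed monomial splits into two monomials with exponent sequences `α` and `β`. In such a
splitting every part of `β` is at most some part of `γ`, so a part larger than `k` in `β`
produces one in `γ`, which is the ideal property. The `M_α` are linearly independent, hence a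
basis of `QSym`, and a quotient by the span of some basis vectors has the images of the
others as a basis.
-/

open Finset.HasAntidiagonal Submodule

theorem Finsupp.sum_antidiagonal_embDomain {σ τ M : Type*} [DecidableEq σ] [DecidableEq τ]
    [AddCommMonoid M] (φ : σ ↪ τ) (d : σ →₀ ℕ) (F : (τ →₀ ℕ) → (τ →₀ ℕ) → M) :
    ∑ p ∈ antidiagonal (d.embDomain φ), F p.1 p.2 =
      ∑ p ∈ antidiagonal d, F (p.1.embDomain φ) (p.2.embDomain φ) := by
  symm
  refine Finset.sum_nbij (fun p => (p.1.embDomain φ, p.2.embDomain φ)) ?_ ?_ ?_ fun _ _ => rfl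
  · intro p hp
    rw [mem_antidiagonal] at hp ⊢
    rw [← embDomain_add, hp]
  · intro p _ q _ h
    simp only [Prod.mk.injEq] at h
    exact Prod.ext (embDomain_injective φ h.1) (embDomain_injective φ h.2)
  · intro p hp
    have hp : p.1 + p.2 = d.embDomain φ := mem_antidiagonal.mp hp
    have support_le : ∀ a ≤ d.embDomain φ, (a.support : Set τ) ⊆ Set.range φ := fun a ha => by
      have := Finset.coe_subset.mpr (support_mono ha)
      rw [support_embDomain, Finset.coe_map] at this
      exact this.trans (Set.image_subset_range _ _)
    have h₁ := embDomain_comapDomain (support_le p.1 (hp ▸ le_self_add))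
    have h₂ := embDomain_comapDomain (support_le p.2 (hp ▸ le_add_self))
    refine ⟨(p.1.comapDomain φ φ.injective.injOn, p.2.comapDomain φ φ.injective.injOn), ?_, ?_⟩
    · refine mem_antidiagonal.mpr (embDomain_injective φ ?_)
      rw [embDomain_add, h₁, h₂, hp]
    · simp [h₁, h₂]

theorem Submodule.mul_mem_of_mem_span {R A : Type*} [CommSemiring R] [Semiring A] [Algebra R A]
    {S T : Set A} {P : Submodule R A} (h : ∀ s ∈ S, ∀ t ∈ T, s * t ∈ P) {f g : A}
    (hf : f ∈ span R S) (hg : g ∈ span R T) : f * g ∈ P := by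
  have hfg := mul_mem_mul hf hg
  rw [span_mul_span] at hfg
  exact span_le.mpr (Set.mul_subset_iff.mpr h) hfg

section QuotientBySpan

variable {ι R M : Type*} [Ring R] [AddCommGroup M] [Module R M] {v : ι → M} (p : ι → Prop)

-- `hN` lets these apply to a quotient `M ⧸ N` whose `N` is only propositionally that span.
theorem LinearIndependent.mkQ_span_image_setOf_not (hv : LinearIndependent R v)
    {N : Submodule R M} (hN : N = span R (v '' {i | ¬ p i})) :
    LinearIndependent R fun i : {i // p i} => N.mkQ (v i) := by
  subst hN
  refine (hv.comp _ Subtype.val_injective).map ?_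
  rw [ker_mkQ, Set.range_comp, Subtype.range_coe_subtype]
  exact hv.disjoint_span_image (Set.disjoint_left.mpr fun _ hi hi' => hi' hi)

theorem Submodule.span_range_mkQ_span_image_setOf_not (hv : span R (Set.range v) = ⊤)
    {N : Submodule R M} (hN : N = span R (v '' {i | ¬ p i})) :
    span R (Set.range fun i : {i // p i} => N.mkQ (v i)) = ⊤ := by
  subst hN
  have hrange : (Set.range fun i : {i // p i} => (span R (v '' {i | ¬ p i})).mkQ (v i)) =
      (span R (v '' {i | ¬ p i})).mkQ '' (v '' {i | p i}) := by
    ext; simp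
  rw [hrange, span_image, map_mkQ_eq_top, sup_comm]
  exact (codisjoint_span_image_of_codisjoint hv
    (codisjoint_iff.mpr (Set.eq_univ_of_forall fun i => em (p i)))).eq_top

end QuotientBySpan

namespace QSym

open Finsupp

def expSeq (d : ℕ →₀ ℕ) : List ℕ := d.support.sort.map d

lemma pos_of_mem_expSeq {d : ℕ →₀ ℕ} {x : ℕ} (hx : x ∈ expSeq d) : 0 < x := by
  obtain ⟨i, hi, rfl⟩ := List.mem_map.mp hx
  exact Nat.pos_of_ne_zero (mem_support_iff.mp ((Finset.mem_sort _).mp hi))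

lemma sum_expSeq (d : ℕ →₀ ℕ) : (expSeq d).sum = d.degree := by
  rw [expSeq, degree_apply, ← Finset.sum_map_toList]
  exact ((Finset.sort_perm_toList _ _).map d).sum_eq

lemma exists_ge_of_mem_expSeq {a d : ℕ →₀ ℕ} (h : a ≤ d) {x : ℕ} (hx : x ∈ expSeq a) :
    ∃ y ∈ expSeq d, x ≤ y := by
  obtain ⟨i, hi, rfl⟩ := List.mem_map.mp hx
  exact ⟨d i, List.mem_map_of_mem ((Finset.mem_sort _).mpr
    (support_mono h ((Finset.mem_sort _).mp hi))), h i⟩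

lemma expSeq_embDomain (φ : ℕ ↪o ℕ) (d : ℕ →₀ ℕ) :
    expSeq (d.embDomain φ.toEmbedding) = expSeq d := by
  rw [expSeq, support_embDomain,
    ← (φ.strictMono.strictMonoOn (d.support : Set ℕ)).map_finsetSort, List.map_map]
  exact List.map_congr_left fun i _ => embDomain_apply_self _ _ _

lemma expSeq_toFinsupp {w : List ℕ} (hw : 0 ∉ w) : expSeq w.toFinsupp = w := by
  have hsupp : w.toFinsupp.support = Finset.range w.length := by
    rw [List.toFinsupp_support, Finset.filter_true_of_mem]
    intro i hi
    rw [List.getD_eq_getElem _ _ (Finset.mem_range.mp hi)]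
    exact fun h => hw (h ▸ List.getElem_mem _)
  rw [expSeq, hsupp, Finset.sort_range]
  refine List.ext_getElem (by simp) fun i _ h => ?_
  simp [List.toFinsupp_apply, List.getElem?_eq_getElem h]

lemma exists_embDomain_toFinsupp_expSeq (d : ℕ →₀ ℕ) :
    ∃ φ : ℕ ↪o ℕ, (expSeq d).toFinsupp.embDomain φ.toEmbedding = d := by
  set l := d.support.sort
  set N := d.support.sup id + 1
  have lt_N : ∀ i ∈ d.support, i < N := fun i hi => Nat.lt_succ_of_le (Finset.le_sup (f := id) hi)
  have mem_l : ∀ {i}, i ∈ l ↔ i ∈ d.support := Finset.mem_sort _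
  -- `φ` runs through the support in increasing order, then continues above it
  have hφ : StrictMono fun j => l.getD j (N + j) := by
    refine strictMono_nat_of_lt_succ fun j => ?_
    rcases lt_trichotomy (j + 1) l.length with h | h | h
    · simp only [List.getD_eq_getElem _ _ h, List.getD_eq_getElem _ _ (Nat.lt_of_succ_lt h)]
      exact (Finset.sortedLT_sort _).getElem_lt_getElem_iff.mpr (Nat.lt_succ_self j)
    · rw [List.getD_eq_getElem _ _ (by omega), List.getD_eq_default _ _ h.ge]
      have := lt_N _ (mem_l.mp (List.getElem_mem (l := l) (n := j) (by omega)))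
      omega
    · rw [List.getD_eq_default _ _ (by omega), List.getD_eq_default _ _ h.le]
      omega
  refine ⟨OrderEmbedding.ofStrictMono _ hφ, ?_⟩
  ext i
  by_cases hi : i ∈ Set.range (OrderEmbedding.ofStrictMono _ hφ)
  · obtain ⟨j, rfl⟩ := hi
    rw [← RelEmbedding.coe_toEmbedding, embDomain_apply_self, List.toFinsupp_apply]
    show (l.map d).getD j 0 = d (l.getD j (N + j))
    by_cases hj : j < l.length
    · rw [List.getD_eq_getElem _ _ (by simpa using hj), List.getD_eq_getElem _ _ hj,
        List.getElem_map]
    · rw [List.getD_eq_default _ _ (by simpa using hj), List.getD_eq_default _ _ (not_lt.mp hj),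
        eq_comm, ← notMem_support_iff]
      exact fun h => by have := lt_N _ h; omega
  · rw [embDomain_of_notMem_range _ _ _ hi, eq_comm, ← notMem_support_iff]
    intro h
    obtain ⟨j, hj, rfl⟩ := List.getElem_of_mem (mem_l.mpr h)
    exact hi ⟨j, List.getD_eq_getElem _ _ hj⟩

-- `α.map fun p => (p : ℕ)`, as written in `Mqs` and `psum`, elaborates through the coercion
-- `List ℕ+ → List ℕ` given by the list monad, so it is not syntactically `α.map PNat.val`.
lemma map_coe_eq_map_val (α : List ℕ+) : (α.map fun p => (p : ℕ)) = α.map PNat.val := by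
  simpa using List.map_eq_flatMap.symm

lemma map_val_injective : Function.Injective (List.map PNat.val) :=
  List.map_injective_iff.mpr PNat.coe_injective

lemma zero_notMem_map_val (α : List ℕ+) : 0 ∉ α.map PNat.val := by
  simp

lemma psum_eq_sum_map_val (α : List ℕ+) : psum α = (α.map PNat.val).sum := by
  rw [psum, map_coe_eq_map_val]

lemma finite_setOf_psum_eq (n : ℕ) : {γ : List ℕ+ | psum γ = n}.Finite := by
  refine Set.Finite.of_finite_image ?_ map_val_injective.injOn
  refine (Set.finite_range fun c : Composition n => c.blocks).subset ?_
  rintro _ ⟨γ, hγ, rfl⟩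
  exact ⟨⟨γ.map PNat.val, by simp, by rw [← psum_eq_sum_map_val]; exact hγ⟩, rfl⟩

lemma coeff_Mqs (α : List ℕ+) (d : ℕ →₀ ℕ) :
    MvPowerSeries.coeff d (Mqs α) = if expSeq d = α.map PNat.val then 1 else 0 := by
  rw [MvPowerSeries.coeff_apply, Mqs, map_coe_eq_map_val]; rfl

def IsQuasisymmetric {R : Type*} [Semiring R] (f : MvPowerSeries ℕ R) : Prop :=
  ∀ (φ : ℕ ↪o ℕ) (d : ℕ →₀ ℕ),
    MvPowerSeries.coeff (d.embDomain φ.toEmbedding) f = MvPowerSeries.coeff d f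

lemma isQuasisymmetric_Mqs (α : List ℕ+) : IsQuasisymmetric (Mqs α) := by
  intro φ d
  rw [coeff_Mqs, coeff_Mqs, expSeq_embDomain]

lemma IsQuasisymmetric.mul {R : Type*} [Semiring R] {f g : MvPowerSeries ℕ R}
    (hf : IsQuasisymmetric f) (hg : IsQuasisymmetric g) : IsQuasisymmetric (f * g) := by
  intro φ d
  rw [MvPowerSeries.coeff_mul, MvPowerSeries.coeff_mul, sum_antidiagonal_embDomain φ.toEmbedding d
    fun a b => MvPowerSeries.coeff a f * MvPowerSeries.coeff b g]
  simp only [hf φ, hg φ]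

lemma IsQuasisymmetric.coeff_eq {R : Type*} [Semiring R] {f : MvPowerSeries ℕ R}
    (hf : IsQuasisymmetric f) (d : ℕ →₀ ℕ) :
    MvPowerSeries.coeff d f = MvPowerSeries.coeff (expSeq d).toFinsupp f := by
  obtain ⟨φ, hφ⟩ := exists_embDomain_toFinsupp_expSeq d
  conv_lhs => rw [← hφ]
  exact hf φ _

lemma IsQuasisymmetric.mem_span_Mqs {f : PS} (hf : IsQuasisymmetric f) {S : Set (List ℕ+)}
    (hS : S.Finite)
    (hsupp : ∀ γ, MvPowerSeries.coeff (γ.map PNat.val).toFinsupp f ≠ 0 → γ ∈ S) :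
    f ∈ span ℚ (Mqs '' S) := by
  classical
  set c : List ℕ+ → ℚ := fun γ => MvPowerSeries.coeff (γ.map PNat.val).toFinsupp f
  suffices f = ∑ γ ∈ hS.toFinset, c γ • Mqs γ by
    rw [this]
    exact sum_mem fun γ hγ => smul_mem _ _ (subset_span ⟨γ, hS.mem_toFinset.mp hγ, rfl⟩)
  ext d
  obtain ⟨γ₀, hγ₀⟩ : ∃ γ₀ : List ℕ+, γ₀.map PNat.val = expSeq d :=
    CanLift.prf _ fun x hx => pos_of_mem_expSeq hx
  simp only [map_sum, map_smul, coeff_Mqs, ← hγ₀, map_val_injective.eq_iff, smul_eq_mul, mul_ite,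
    mul_one, mul_zero, Finset.sum_ite_eq, hS.mem_toFinset]
  rw [hf.coeff_eq d, ← hγ₀]
  split_ifs with hγ₀S
  · rfl
  · exact not_ne_iff.mp (mt (hsupp γ₀) hγ₀S)

lemma Mqs_mul_mem_span (α β : List ℕ+) :
    Mqs α * Mqs β ∈
      span ℚ (Mqs '' {γ | psum γ = psum α + psum β ∧ ∀ x ∈ β, ∃ y ∈ γ, x ≤ y}) := by
  classical
  refine ((isQuasisymmetric_Mqs α).mul (isQuasisymmetric_Mqs β)).mem_span_Mqs
    ((finite_setOf_psum_eq _).subset fun γ hγ => hγ.1) fun γ hγ => ?_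
  rw [MvPowerSeries.coeff_mul] at hγ
  obtain ⟨p, hp, hne⟩ := Finset.exists_ne_zero_of_sum_ne_zero hγ
  rw [coeff_Mqs, coeff_Mqs] at hne
  obtain ⟨h₁, h₂⟩ := mul_ne_zero_iff.mp hne
  replace h₁ := (ite_ne_right_iff.mp h₁).1
  replace h₂ := (ite_ne_right_iff.mp h₂).1
  have hsum : p.1 + p.2 = (γ.map PNat.val).toFinsupp := mem_antidiagonal.mp hp
  refine ⟨?_, fun x hx => ?_⟩
  · rw [psum_eq_sum_map_val, psum_eq_sum_map_val, psum_eq_sum_map_val, ← h₁, ← h₂,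
      sum_expSeq, sum_expSeq, ← map_add, hsum, ← sum_expSeq,
      expSeq_toFinsupp (zero_notMem_map_val γ)]
  · obtain ⟨y, hy, hxy⟩ := exists_ge_of_mem_expSeq (hsum ▸ le_add_self)
      (h₂ ▸ List.mem_map_of_mem hx : (x : ℕ) ∈ expSeq p.2)
    rw [expSeq_toFinsupp (zero_notMem_map_val γ)] at hy
    obtain ⟨z, hz, rfl⟩ := List.mem_map.mp hy
    exact ⟨z, hz, hxy⟩

lemma linearIndependent_Mqs : LinearIndependent ℚ Mqs := by
  classical
  rw [linearIndependent_iff']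
  intro s c hsum γ hγ
  have := congrArg (MvPowerSeries.coeff (γ.map PNat.val).toFinsupp) hsum
  simpa [coeff_Mqs, expSeq_toFinsupp (zero_notMem_map_val γ), map_val_injective.eq_iff, hγ]
    using this

noncomputable def qsymBasis : Module.Basis (List ℕ+) ℚ QSymSub :=
  .span linearIndependent_Mqs

lemma qsymBasis_apply (α : List ℕ+) :
    qsymBasis α = ⟨Mqs α, subset_span (Set.mem_range_self α)⟩ :=
  Module.Basis.span_apply _ _

lemma comap_subtype_badC (k : ℕ) :
    comap QSymSub.subtype (badC k) = span ℚ (qsymBasis '' {α | ¬ kBddC k α}) := by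
  have : Mqs '' {α | ¬ kBddC k α} = QSymSub.subtype '' (qsymBasis '' {α | ¬ kBddC k α}) := by
    simp [Set.image_image, qsymBasis_apply]
  rw [badC, this, span_image, comap_map_eq_of_injective QSymSub.injective_subtype]

lemma MQuot_eq_mkQ (k : ℕ) (α : List ℕ+) :
    MQuot k α = (comap QSymSub.subtype (badC k)).mkQ (qsymBasis α) := by
  rw [qsymBasis_apply]; rfl

end QSym

open QSym

theorem qsymQuot_ideal_and_basis_general (k : ℕ) :
    (∀ f ∈ QSymSub, ∀ g ∈ QSymSub, f * g ∈ QSymSub) ∧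
      badC k ≤ QSymSub ∧
      (∀ f ∈ QSymSub, ∀ g ∈ badC k, f * g ∈ badC k) ∧
      (LinearIndependent ℚ fun α : {α : List ℕ+ // kBddC k α} => MQuot k α.1) ∧
      Submodule.span ℚ
          (Set.range fun α : {α : List ℕ+ // kBddC k α} => MQuot k α.1) = ⊤ := by
  refine ⟨fun f hf g hg => ?_, span_mono (Set.image_subset_range _ _),
    fun f hf g hg => ?_, ?_⟩
  · refine mul_mem_of_mem_span ?_ hf hg
    rintro _ ⟨α, rfl⟩ _ ⟨β, rfl⟩
    exact span_mono (Set.image_subset_range _ _) (Mqs_mul_mem_span α β)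
  · refine mul_mem_of_mem_span ?_ hf hg
    rintro _ ⟨α, rfl⟩ _ ⟨β, hβ, rfl⟩
    have hsub : {γ | psum γ = psum α + psum β ∧ ∀ x ∈ β, ∃ y ∈ γ, x ≤ y} ⊆
        {γ | ¬ kBddC k γ} := fun γ hγ hγk => hβ fun x hx => by
      obtain ⟨y, hy, hxy⟩ := hγ.2 x hx
      exact ((PNat.coe_le_coe _ _).mpr hxy).trans (hγk y hy)
    exact span_mono (Set.image_mono hsub) (Mqs_mul_mem_span α β)
  · simp only [MQuot_eq_mkQ]
    exact ⟨qsymBasis.linearIndependent.mkQ_span_image_setOf_not _ (comap_subtype_badC k),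
      span_range_mkQ_span_image_setOf_not _ qsymBasis.span_eq (comap_subtype_badC k)⟩

/-- Fix `k ≥ 1`.  The span of `{M_α : α has a part > k}` is an ideal of
`QSym` (the span of all `M_α`, which is closed under multiplication); consequently
`QSym^(k)` is a ℚ-algebra and the images of the `k`-bounded monomial quasi-symmetric
functions form a ℚ-basis of `QSym^(k)`. -/
theorem qsymQuot_ideal_and_basis (k : ℕ) (hk : 1 ≤ k) :
    (∀ f ∈ QSymSub, ∀ g ∈ QSymSub, f * g ∈ QSymSub) ∧
      badC k ≤ QSymSub ∧
      (∀ f ∈ QSymSub, ∀ g ∈ badC k, f * g ∈ badC k) ∧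
      (LinearIndependent ℚ fun α : {α : List ℕ+ // kBddC k α} => MQuot k α.1) ∧
      Submodule.span ℚ
          (Set.range fun α : {α : List ℕ+ // kBddC k α} => MQuot k α.1) = ⊤ :=
  qsymQuot_ideal_and_basis_general k
end
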